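/- Let X = {X(t), t ∈ ℝ^d} be a stochastically continuous and proper (E,D)-w.o.s.s. random field with values in ℝ^m. Let λ > 0 be an eigenvalue of E and let ξ ∈ ℝ^d \ {0} satisfy Eξ = λξ. Then there exists a continuous function f : ℝ \ {0} → ℝ^m such that b_r(uξ) = f(u r^λ) − r^D f(u) for all u ≠ 0 and all r > 0. -/

import Mathlib

open MeasureTheory Filter Matrix Topology Set
open scoped ENNReal NNReal

/-- `mpow r A` is `r^A := exp((ln r) A)` for `r > 0` and a real square matrix `A`. -/
noncomputable def mpow {n : ℕ} (r : ℝ) (A : Matrix (Fin n) (Fin n) ℝ) :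
    Matrix (Fin n) (Fin n) ℝ :=
  NormedSpace.exp (Real.log r • A)

/-- The set of (complex) eigenvalues of a real square matrix. -/
def matSpectrum {n : ℕ} (A : Matrix (Fin n) (Fin n) ℝ) : Set ℂ :=
  spectrum ℂ (A.map (Complex.ofReal))

/-- `QSet n` is `Q(ℝⁿ)`: matrices whose eigenvalues all have positive real part. -/
def QSet (n : ℕ) : Set (Matrix (Fin n) (Fin n) ℝ) :=
  {A | ∀ μ ∈ matSpectrum A, 0 < μ.re}

/-- `MSet n` is `M(ℝⁿ)`: matrices whose eigenvalues all have nonnegative real part and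
such that every eigenvalue with zero real part is a simple root of the minimal polynomial. -/
def MSet (n : ℕ) : Set (Matrix (Fin n) (Fin n) ℝ) :=
  {A | ∀ μ ∈ matSpectrum A, 0 ≤ μ.re ∧
    (μ.re = 0 → (minpoly ℂ (A.map (Complex.ofReal))).rootMultiplicity μ = 1)}

/-- Equality of all finite-dimensional distributions of two random fields. -/
def IdentFDD {Ω T β : Type*} [MeasurableSpace Ω] [MeasurableSpace β]
    (P : Measure Ω) (Y Z : T → Ω → β) : Prop :=
  ∀ (k : ℕ) (t : Fin k → T),
    P.map (fun ω i => Y (t i) ω) = P.map (fun ω i => Z (t i) ω)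

/-- Stochastic continuity: `X s → X t` in probability whenever `s → t`. -/
def StochContinuous {Ω : Type*} [MeasurableSpace Ω] (P : Measure Ω) {d m : ℕ}
    (X : (Fin d → ℝ) → Ω → (Fin m → ℝ)) : Prop :=
  ∀ (t : Fin d → ℝ), ∀ ε > (0 : ℝ),
    Tendsto (fun s => P {ω | ε ≤ dist (X s ω) (X t ω)}) (𝓝 t) (𝓝 0)

/-- A distribution on `ℝ^m` is full if its support is not contained in any proper
hyperplane; equivalently, it does not give full mass to any hyperplane. -/
def IsFullMeasure {m : ℕ} (μ : Measure (Fin m → ℝ)) : Prop :=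
  ∀ (y : Fin m → ℝ), y ≠ 0 → ∀ c : ℝ, μ {x | ∑ i, x i * y i = c} ≠ 1

/-- A random field is proper if the distribution of `X t` is full for every `t ≠ 0`. -/
def ProperField {Ω : Type*} [MeasurableSpace Ω] (P : Measure Ω) {d m : ℕ}
    (X : (Fin d → ℝ) → Ω → (Fin m → ℝ)) : Prop :=
  ∀ t : Fin d → ℝ, t ≠ 0 → IsFullMeasure (P.map (X t))

/-- Wide-sense operator-self-similarity with time-variable scaling exponent `E`. -/
def WOSS {Ω : Type*} [MeasurableSpace Ω] (P : Measure Ω) {d m : ℕ}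
    (X : (Fin d → ℝ) → Ω → (Fin m → ℝ)) (E : Matrix (Fin d) (Fin d) ℝ) : Prop :=
  ∀ r : ℝ, 0 < r → ∃ (B : Matrix (Fin m) (Fin m) ℝ) (a : (Fin d → ℝ) → (Fin m → ℝ)),
    IdentFDD P (fun t ω => X (mpow r E *ᵥ t) ω) (fun t ω => B *ᵥ X t ω + a t)

/-- The operator norm `max_{|x|=1} |Q x|` (Euclidean norms) of a matrix. -/
noncomputable def opNorm {n m : ℕ} (Q : Matrix (Fin m) (Fin n) ℝ) : ℝ :=
  ‖LinearMap.toContinuousLinearMap (Matrix.toEuclideanLin Q)‖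

/-- The Euclidean norm of a vector in `ℝ^n`. -/
noncomputable def euclNorm {n : ℕ} (v : Fin n → ℝ) : ℝ :=
  Real.sqrt (∑ i, v i ^ 2)

/-- `G_r`: invertible matrices `A` such that `{X(r^E t)} ≡fdd {A X(t) + b(t)}`
for some deterministic function `b : ℝ^d → ℝ^m`. -/
def GSet {Ω : Type*} [MeasurableSpace Ω] (P : Measure Ω) {d m : ℕ}
    (X : (Fin d → ℝ) → Ω → (Fin m → ℝ)) (E : Matrix (Fin d) (Fin d) ℝ)
    (r : ℝ) : Set (Matrix (Fin m) (Fin m) ℝ) :=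
  {A | IsUnit A ∧ ∃ b : (Fin d → ℝ) → (Fin m → ℝ),
    IdentFDD P (fun t ω => X (mpow r E *ᵥ t) ω) (fun t ω => A *ᵥ X t ω + b t)}

/-- `G = ⋃_{r>0} G_r`. -/
def GAll {Ω : Type*} [MeasurableSpace Ω] (P : Measure Ω) {d m : ℕ}
    (X : (Fin d → ℝ) → Ω → (Fin m → ℝ)) (E : Matrix (Fin d) (Fin d) ℝ) :
    Set (Matrix (Fin m) (Fin m) ℝ) :=
  ⋃ r ∈ Set.Ioi (0 : ℝ), GSet P X E r

/-- A radial part `τ` under the operator `E`. -/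
structure IsRadialPart {d : ℕ} (E : Matrix (Fin d) (Fin d) ℝ)
    (τ : (Fin d → ℝ) → ℝ) : Prop where
  continuous : Continuous τ
  nonneg : ∀ x, 0 ≤ τ x
  pos : ∀ x : Fin d → ℝ, x ≠ 0 → 0 < τ x
  map_zero : τ 0 = 0
  even : ∀ x, τ (-x) = τ x
  scaling : ∀ r : ℝ, 0 < r → ∀ x, τ (mpow r E *ᵥ x) = r * τ x
  isCompact_sphere : IsCompact {x | τ x = 1}
  zero_not_mem : (0 : Fin d → ℝ) ∉ {x | τ x = 1}
  tendsto_atTop : ∀ M : ℝ, ∃ R : ℝ, ∀ x : Fin d → ℝ, R ≤ ‖x‖ → M ≤ τ x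
  tendsto_zero : Tendsto τ (𝓝 0) (𝓝 0)

/-- `φ` is `E`-homogeneous: `φ(r^E x) = r φ(x)` for all `r > 0` and `x ≠ 0`. -/
def EHomogeneous {d : ℕ} (E : Matrix (Fin d) (Fin d) ℝ)
    (φ : (Fin d → ℝ) → ℝ) : Prop :=
  ∀ r : ℝ, 0 < r → ∀ x : Fin d → ℝ, x ≠ 0 → φ (mpow r E *ᵥ x) = r * φ x

/-- `ψ` is `(β,E)`-admissible with respect to the radial part `τ`. -/
def Admissible {d : ℕ} (τ : (Fin d → ℝ) → ℝ) (β : ℝ)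
    (ψ : (Fin d → ℝ) → ℝ) : Prop :=
  (∀ x : Fin d → ℝ, x ≠ 0 → 0 < ψ x) ∧
  ∀ A B : ℝ, 0 < A → A < B → ∃ C : ℝ, 0 < C ∧ ∀ y : Fin d → ℝ,
    A ≤ euclNorm y → euclNorm y ≤ B → ∀ x : Fin d → ℝ, τ x ≤ 1 →
      |ψ (x + y) - ψ y| ≤ C * τ x ^ β

/-! Comparing the one-dimensional laws of `X(r^E s^E t) = X((rs)^E t)` obtained by scaling
once by `rs` and twice (by `s`, then by `r`) gives the cocycle identity
`b_{rs}(t) = r^D b_s(t) + b_r(s^E t)`; the two shift vectors must agree because no nonzero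
translation of `ℝ^m` preserves a probability law. On the eigenline, `s^E (εξ) = s^λ εξ`, so
the cocycle identity at `sign u • ξ` is the required formula for `f u := b_{|u|^{1/λ}}(sign u • ξ)`,
which is continuous away from `0` because `b` is. -/

open ProbabilityTheory

theorem Matrix.exp_mulVec_of_mulVec_eq_smul {n : Type*} [Fintype n] [DecidableEq n]
    {A : Matrix n n ℝ} {v : n → ℝ} {c : ℝ} (h : A *ᵥ v = c • v) :
    NormedSpace.exp A *ᵥ v = Real.exp c • v := by
  open scoped Matrix.Norms.Operator in
  have hpow : ∀ k : ℕ, A ^ k *ᵥ v = c ^ k • v := by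
    intro k
    induction k with
    | zero => simp
    | succ k ih => rw [pow_succ', ← mulVec_mulVec, ih, mulVec_smul, h, smul_smul, ← pow_succ]
  have hA := (NormedSpace.exp_series_hasSum_exp' (𝕂 := ℝ) A).map (mulVec.addMonoidHomLeft v)
    (Continuous.matrix_mulVec continuous_id continuous_const)
  have hc := (NormedSpace.exp_series_hasSum_exp' (𝕂 := ℝ) c).smul_const v
  rw [← Real.exp_eq_exp_ℝ] at hc
  refine hA.unique ?_
  simpa [Function.comp_def, mulVec.addMonoidHomLeft, smul_mulVec, hpow, smul_smul] using hc

theorem mpow_mulVec_of_mulVec_eq_smul {n : ℕ} {A : Matrix (Fin n) (Fin n) ℝ} {v : Fin n → ℝ}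
    {lam : ℝ} (h : A *ᵥ v = lam • v) {r : ℝ} (hr : 0 < r) :
    mpow r A *ᵥ v = r ^ lam • v := by
  have hlog : (Real.log r • A) *ᵥ v = (Real.log r * lam) • v := by
    rw [smul_mulVec, h, smul_smul]
  rw [mpow, Matrix.exp_mulVec_of_mulVec_eq_smul hlog, Real.rpow_def_of_pos hr]

theorem mpow_mul {n : ℕ} (A : Matrix (Fin n) (Fin n) ℝ) {r s : ℝ} (hr : 0 < r) (hs : 0 < s) :
    mpow (r * s) A = mpow r A * mpow s A := by
  rw [mpow, mpow, mpow, Real.log_mul hr.ne' hs.ne', add_smul]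
  exact Matrix.exp_add_of_commute _ _ (((Commute.refl A).smul_right _).smul_left _)

theorem MeasureTheory.Measure.map_add_nsmul_eq_self {M : Type*} [AddMonoid M] [MeasurableSpace M]
    [MeasurableAdd M] {μ : Measure M} {c : M} (h : μ.map (· + c) = μ) (n : ℕ) :
    μ.map (· + n • c) = μ := by
  induction n with
  | zero => simp
  | succ n ih =>
    have hcomp : (· + (n + 1) • c) = (· + c) ∘ (· + n • c) := by
      funext x
      simp [succ_nsmul, add_assoc]
    rw [hcomp, ← Measure.map_map (measurable_add_const c) (measurable_add_const _), ih, h]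

theorem MeasureTheory.exists_measure_closedBall_gt {X : Type*} [PseudoMetricSpace X]
    [MeasurableSpace X] {μ : Measure X} (x : X) {a : ℝ≥0∞} (ha : a < μ univ) : ∃ R : ℝ, a < μ (Metric.closedBall x R) := by
  have hlim := tendsto_measure_iUnion_atTop (μ := μ)
    (monotone_nat_of_le_succ fun n => Metric.closedBall_subset_closedBall (x := x)
      (by simp : (n : ℝ) ≤ (n + 1 : ℕ)))
  rw [Metric.iUnion_closedBall_nat] at hlim
  obtain ⟨n, hn⟩ := (hlim.eventually (eventually_gt_nhds ha)).exists
  exact ⟨n, hn⟩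

section Translation

variable {G : Type*} [NormedAddCommGroup G] [NormedSpace ℝ G] [MeasurableSpace G] [BorelSpace G]

-- A ball of mass `> 1/2` and its translate by a large multiple of `c` would be disjoint.
theorem MeasureTheory.eq_zero_of_map_add_eq_self {μ : Measure G} [IsProbabilityMeasure μ] {c : G}
    (h : μ.map (· + c) = μ) : c = 0 := by
  by_contra hc
  obtain ⟨R, hR⟩ := exists_measure_closedBall_gt (μ := μ) (a := 1 / 2) 0 <| by
    rw [measure_univ]
    exact ENNReal.half_lt_self one_ne_zero ENNReal.one_ne_top
  obtain ⟨n, hn⟩ := exists_lt_nsmul (norm_pos_iff.2 hc) (R + R)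
  have hdisj : Disjoint (Metric.closedBall 0 R) (Metric.closedBall (-(n • c)) R) :=
    Metric.closedBall_disjoint_closedBall <| by
      rwa [dist_zero_left, norm_neg, RCLike.norm_nsmul ℝ]
  have htrans : μ (Metric.closedBall (-(n • c)) R) = μ (Metric.closedBall 0 R) := by
    conv_rhs => rw [← μ.map_add_nsmul_eq_self h n]
    rw [Measure.map_apply (continuous_add_const _).measurable measurableSet_closedBall]
    congr 1
    ext x
    simp [dist_eq_norm]
  have := prob_le_one (μ := μ) (s := Metric.closedBall 0 R ∪ Metric.closedBall (-(n • c)) R)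
  rw [measure_union hdisj measurableSet_closedBall, htrans] at this
  have hlt := (ENNReal.add_lt_add hR hR).trans_le this
  rw [ENNReal.add_halves] at hlt
  exact lt_irrefl _ hlt

theorem ProbabilityTheory.IdentDistrib.add_const_cancel {Ω : Type*} [MeasurableSpace Ω]
    {P : Measure Ω} [IsProbabilityMeasure P] {Y : Ω → G} (hY : Measurable Y) {c₁ c₂ : G}
    (h : IdentDistrib (fun ω => Y ω + c₁) (fun ω => Y ω + c₂) P P) : c₁ = c₂ := by
  have hY₂ : Measurable fun ω => Y ω + c₂ := (continuous_add_const c₂).measurable.comp hY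
  have := Measure.isProbabilityMeasure_map (μ := P) hY₂.aemeasurable
  refine sub_eq_zero.1 (eq_zero_of_map_add_eq_self (μ := P.map fun ω => Y ω + c₂) ?_)
  rw [Measure.map_map (continuous_add_const _).measurable hY₂, ← h.map_eq]
  congr 1
  funext ω
  simp

end Translation

theorem IdentFDD.identDistrib {Ω T β : Type*} [MeasurableSpace Ω] [MeasurableSpace β]
    {P : Measure Ω} {Y Z : T → Ω → β} (h : IdentFDD P Y Z) (hY : ∀ t, Measurable (Y t))
    (hZ : ∀ t, Measurable (Z t)) (t : T) : IdentDistrib (Y t) (Z t) P P :=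
  (⟨(measurable_pi_lambda _ fun _ => hY t).aemeasurable,
    (measurable_pi_lambda _ fun _ => hZ t).aemeasurable, h 1 fun _ => t⟩ :
    IdentDistrib (fun ω (_ : Fin 1) => Y t ω) (fun ω _ => Z t ω) P P).comp
    (measurable_pi_apply 0)

theorem woss_shift_cocycle {Ω : Type*} [MeasurableSpace Ω] {P : Measure Ω}
    [IsProbabilityMeasure P] {d m : ℕ} {X : (Fin d → ℝ) → Ω → (Fin m → ℝ)}
    {E : Matrix (Fin d) (Fin d) ℝ} {D : Matrix (Fin m) (Fin m) ℝ}
    {b : ℝ → (Fin d → ℝ) → (Fin m → ℝ)} (hX : ∀ t, Measurable (X t))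
    (hfdd : ∀ r : ℝ, 0 < r → IdentFDD P (fun t ω => X (mpow r E *ᵥ t) ω)
      (fun t ω => mpow r D *ᵥ X t ω + b r t))
    {r s : ℝ} (hr : 0 < r) (hs : 0 < s) (t : Fin d → ℝ) :
    b (r * s) t = mpow r D *ᵥ b s t + b r (mpow s E *ᵥ t) := by
  have hMX : ∀ (M : Matrix (Fin m) (Fin m) ℝ) (c : Fin m → ℝ),
      Measurable (fun x : Fin m → ℝ => M *ᵥ x + c) := fun M c =>
    (Continuous.matrix_mulVec continuous_const continuous_id).measurable.add_const c
  have hlaw : ∀ {r : ℝ}, 0 < r → ∀ t, IdentDistrib (X (mpow r E *ᵥ t))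
      (fun ω => mpow r D *ᵥ X t ω + b r t) P P := fun hr t =>
    (hfdd _ hr).identDistrib (fun _ => hX _) (fun t => (hMX _ _).comp (hX t)) t
  have hrs := hlaw (mul_pos hr hs) t
  have hr' := hlaw hr (mpow s E *ᵥ t)
  have hs' := (hlaw hs t).comp (hMX (mpow r D) (b r (mpow s E *ᵥ t)))
  rw [mulVec_mulVec, ← mpow_mul E hr hs] at hr'
  have hcomp : ((fun x => mpow r D *ᵥ x + b r (mpow s E *ᵥ t)) ∘
      fun ω => mpow s D *ᵥ X t ω + b s t) =
      fun ω => mpow (r * s) D *ᵥ X t ω + (mpow r D *ᵥ b s t + b r (mpow s E *ᵥ t)) := by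
    funext ω
    simp only [Function.comp_apply, mulVec_add, mulVec_mulVec, mpow_mul D hr hs, add_assoc]
  rw [hcomp] at hs'
  exact (hrs.symm.trans hr').trans hs' |>.add_const_cancel
    ((Continuous.matrix_mulVec continuous_const continuous_id).measurable.comp (hX t))

theorem exists_continuousOn_eq_sub_of_cocycle {V W : Type*} [AddCommGroup V] [TopologicalSpace V]
    [AddCommGroup W] [Module ℝ W] [TopologicalSpace W] [ContinuousSMul ℝ W]
    (L : ℝ → V → V) (b : ℝ → W → V) (ξ : W) {lam : ℝ} (hlam : 0 < lam)
    (hb : ∀ r : ℝ, 0 < r → ∀ t : W, ContinuousAt (fun p : ℝ × W => b p.1 p.2) (r, t))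
    (hcoc : ∀ ε r s : ℝ, 0 < r → 0 < s →
      b (r * s) (ε • ξ) = L r (b s (ε • ξ)) + b r (s ^ lam • ε • ξ)) :
    ∃ f : ℝ → V, ContinuousOn f {u : ℝ | u ≠ 0} ∧
      ∀ u : ℝ, u ≠ 0 → ∀ r : ℝ, 0 < r → b r (u • ξ) = f (u * r ^ lam) - L r (f u) := by
  refine ⟨fun u => b (|u| ^ lam⁻¹) ((SignType.sign u : ℝ) • ξ), fun u hu => ?_, fun u hu r hr => ?_⟩
  · have hpos : 0 < |u| ^ lam⁻¹ := Real.rpow_pos_of_pos (abs_pos.2 hu) _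
    refine ContinuousAt.continuousWithinAt <| (hb _ hpos _).comp
      (f := fun u : ℝ => (|u| ^ lam⁻¹, (SignType.sign u : ℝ) • ξ)) ?_
    refine (continuous_abs.continuousAt.rpow_const (Or.inl (abs_ne_zero.2 hu))).prodMk ?_
    exact (((continuous_of_discreteTopology (f := fun σ : SignType => (σ : ℝ))).continuousAt.comp
      (continuousAt_sign_of_ne_zero hu)).smul continuousAt_const)
  · set s := |u| ^ lam⁻¹
    have hs : 0 < s := Real.rpow_pos_of_pos (abs_pos.2 hu) _
    have hrl : 0 < r ^ lam := Real.rpow_pos_of_pos hr _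
    have habs : |u * r ^ lam| ^ lam⁻¹ = r * s := by
      rw [abs_mul, abs_of_pos hrl, Real.mul_rpow (abs_nonneg u) hrl.le,
        Real.rpow_rpow_inv hr.le hlam.ne', mul_comm]
    have hsign : SignType.sign (u * r ^ lam) = SignType.sign u := by
      rw [sign_mul, sign_pos hrl, mul_one]
    have hline : s ^ lam • (SignType.sign u : ℝ) • ξ = u • ξ := by
      rw [smul_smul, Real.rpow_inv_rpow (abs_nonneg u) hlam.ne', abs_mul_sign]
    simp only [habs, hsign]
    rw [hcoc _ r s hr hs, hline]
    abel

theorem woss_eigendirection_shift_general {d m : ℕ}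
    {Ω : Type*} [MeasurableSpace Ω] (P : Measure Ω) [IsProbabilityMeasure P]
    (X : (Fin d → ℝ) → Ω → (Fin m → ℝ)) (hXmeas : ∀ t, Measurable (X t))
    (E : Matrix (Fin d) (Fin d) ℝ)
    (D : Matrix (Fin m) (Fin m) ℝ)
    (b : ℝ → (Fin d → ℝ) → (Fin m → ℝ))
    (hbc : ∀ r : ℝ, 0 < r → ∀ t : Fin d → ℝ,
      ContinuousAt (fun p : ℝ × (Fin d → ℝ) => b p.1 p.2) (r, t))
    (hfdd : ∀ r : ℝ, 0 < r →
      IdentFDD P (fun t ω => X (mpow r E *ᵥ t) ω)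
        (fun t ω => mpow r D *ᵥ X t ω + b r t))
    (lam : ℝ) (hlam : 0 < lam) (ξ : Fin d → ℝ)
    (hEξ : E *ᵥ ξ = lam • ξ) :
    ∃ f : ℝ → (Fin m → ℝ), ContinuousOn f {u : ℝ | u ≠ 0} ∧
      ∀ u : ℝ, u ≠ 0 → ∀ r : ℝ, 0 < r →
        b r (u • ξ) = f (u * r ^ lam) - mpow r D *ᵥ f u := by
  refine exists_continuousOn_eq_sub_of_cocycle (fun r v => mpow r D *ᵥ v) b ξ hlam hbc
    fun ε r s hr hs => ?_
  have hEεξ : E *ᵥ (ε • ξ) = lam • ε • ξ := by rw [mulVec_smul, hEξ, smul_comm]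
  rw [woss_shift_cocycle hXmeas hfdd hr hs, mpow_mulVec_of_mulVec_eq_smul hEεξ hs]

/-- **Proposition 2.1 (i).** Along an eigenvector direction `ξ` of `E` with eigenvalue
`λ > 0`, the shift of an `(E,D)`-w.o.s.s. field satisfies
`b_r(uξ) = f(u r^λ) - r^D f(u)` for a continuous `f : ℝ \ {0} → ℝ^m`. -/
theorem woss_eigendirection_shift {d m : ℕ} (hd : 2 ≤ d) (hm : 2 ≤ m)
    {Ω : Type*} [MeasurableSpace Ω] (P : Measure Ω) [IsProbabilityMeasure P]
    (X : (Fin d → ℝ) → Ω → (Fin m → ℝ)) (hXmeas : ∀ t, Measurable (X t))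
    (E : Matrix (Fin d) (Fin d) ℝ) (hE : E ∈ QSet d)
    (hXc : StochContinuous P X) (hXp : ProperField P X)
    (D : Matrix (Fin m) (Fin m) ℝ) (hD : D ∈ MSet m)
    (b : ℝ → (Fin d → ℝ) → (Fin m → ℝ))
    (hbc : ∀ r : ℝ, 0 < r → ∀ t : Fin d → ℝ,
      ContinuousAt (fun p : ℝ × (Fin d → ℝ) => b p.1 p.2) (r, t))
    (hfdd : ∀ r : ℝ, 0 < r →
      IdentFDD P (fun t ω => X (mpow r E *ᵥ t) ω)
        (fun t ω => mpow r D *ᵥ X t ω + b r t))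
    (lam : ℝ) (hlam : 0 < lam) (ξ : Fin d → ℝ) (hξ : ξ ≠ 0)
    (hEξ : E *ᵥ ξ = lam • ξ) :
    ∃ f : ℝ → (Fin m → ℝ), ContinuousOn f {u : ℝ | u ≠ 0} ∧
      ∀ u : ℝ, u ≠ 0 → ∀ r : ℝ, 0 < r →
        b r (u • ξ) = f (u * r ^ lam) - mpow r D *ᵥ f u :=
  woss_eigendirection_shift_general P X hXmeas E D b hbc hfdd lam hlam ξ hEξ
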